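/- arXiv:1206.2185 — 5 statements merged into one kernel-verified Lean document; each statement's English description precedes it below -/
import Mathlib

section
/- Let ν₁, …, ν_N be distinct real numbers, let m ∈ {1,…,N}, and let z ∈ ℂ with z ≠ ν_j for all j. Then the limit as a → 0⁺ of Φ_ν^{ν_m,a}(z) = Γ(1 − a(ν_m − z))·∏_{j≠m} Γ(a(ν_j − ν_m))/Γ(a(ν_j − z)) equals Φ_ν^{ν_m}(z) = ∏_{j≠m} (ν_j − z)/(ν_j − ν_m). (Geometric lifting Φ^{·,a} reduces to the entire function Φ^{·} in the combinatorial limit a → 0.) -/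
/-!
The factor `Γ(1 − a(ν_m − z))` tends to `Γ(1) = 1` by continuity. For the ratios, `Γ` has a
simple pole at `0` with residue `1`, so `Γ(a u) ~ 1/(a u)` as `a → 0`, and hence
`Γ(a u) / Γ(a v) → v / u` whenever `u, v ≠ 0`; here `u = ν_j − ν_m` and `v = ν_j − z`.
-/

open Filter Topology Finset

lemma tendsto_mul_const_nhdsNE_zero {M₀ : Type*} [MulZeroClass M₀] [NoZeroDivisors M₀]
    [TopologicalSpace M₀] [ContinuousMul M₀] {u : M₀} (hu : u ≠ 0) :
    Tendsto (fun s : M₀ => s * u) (𝓝[≠] 0) (𝓝[≠] 0) :=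
  tendsto_nhdsWithin_of_tendsto_nhds_of_eventually_within _
    (by simpa using (tendsto_nhdsWithin_of_tendsto_nhds (tendsto_id (x := 𝓝 (0 : M₀)))).mul_const u)
    (eventually_nhdsWithin_of_forall fun _ hs => mul_ne_zero hs hu)

namespace Complex

lemma tendsto_ofReal_nhdsNE_zero : Tendsto ofReal (𝓝[≠] 0) (𝓝[≠] 0) :=
  tendsto_nhdsWithin_of_tendsto_nhds_of_eventually_within _
    (continuous_ofReal.tendsto' 0 0 ofReal_zero |>.mono_left nhdsWithin_le_nhds)
    (eventually_nhdsWithin_of_forall fun _ ha => ofReal_ne_zero.2 ha)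

lemma tendsto_Gamma_one_sub_ofReal_mul (w : ℂ) :
    Tendsto (fun a : ℝ => Gamma (1 - a * w)) (𝓝 0) (𝓝 1) := by
  have : Tendsto (fun a : ℝ => 1 - (a : ℂ) * w) (𝓝 0) (𝓝 1) := by
    simpa using (continuous_ofReal.tendsto' 0 0 ofReal_zero |>.mul_const w).const_sub 1
  simpa only [Function.comp_def, Gamma_one] using continuousAt_Gamma_one.tendsto.comp this

lemma tendsto_Gamma_mul_div_Gamma_mul {u v : ℂ} (hu : u ≠ 0) (hv : v ≠ 0) :
    Tendsto (fun s : ℂ => Gamma (s * u) / Gamma (s * v)) (𝓝[≠] 0) (𝓝 (v / u)) := by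
  have residue {w : ℂ} (hw : w ≠ 0) :
      Tendsto (fun s : ℂ => s * w * Gamma (s * w)) (𝓝[≠] 0) (𝓝 1) :=
    tendsto_self_mul_Gamma_nhds_zero.comp (tendsto_mul_const_nhdsNE_zero hw)
  have := ((residue hu).div (residue hv) one_ne_zero).mul_const (v / u)
  rw [one_div_one, one_mul] at this
  refine this.congr' ?_
  filter_upwards [self_mem_nhdsWithin] with s (hs : s ≠ 0)
  simp only [Pi.div_apply]
  field_simp

end Complex

/-- Combinatorial limit `a → 0⁺` of the geometric lifting `Φ_ν^{ν_m,a}(z)`: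
it converges to the entire function `Φ_ν^{ν_m}(z) = ∏_{j≠m} (ν_j − z)/(ν_j − ν_m)`. -/
theorem phi_lifting_combinatorial_limit (N : ℕ) (ν : Fin N → ℝ)
    (hν : Function.Injective ν) (m : Fin N) (z : ℂ) (hz : ∀ j, z ≠ (ν j : ℂ)) :
    Tendsto
      (fun a : ℝ =>
        Complex.Gamma (1 - (a : ℂ) * ((ν m : ℂ) - z)) *
          ∏ j ∈ univ.erase m,
            Complex.Gamma ((a : ℂ) * ((ν j : ℂ) - (ν m : ℂ))) /
              Complex.Gamma ((a : ℂ) * ((ν j : ℂ) - z)))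
      (𝓝[>] 0)
      (𝓝 (∏ j ∈ univ.erase m, ((ν j : ℂ) - z) / ((ν j : ℂ) - (ν m : ℂ)))) := by
  have hratio : ∀ j ∈ univ.erase m, Tendsto
      (fun a : ℝ => Complex.Gamma ((a : ℂ) * ((ν j : ℂ) - (ν m : ℂ))) /
        Complex.Gamma ((a : ℂ) * ((ν j : ℂ) - z)))
      (𝓝[>] 0) (𝓝 (((ν j : ℂ) - z) / ((ν j : ℂ) - (ν m : ℂ)))) := by
    intro j hj
    have hνj : (ν j : ℂ) - ν m ≠ 0 :=
      sub_ne_zero.2 (Complex.ofReal_injective.ne (hν.ne (ne_of_mem_erase hj)))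
    have hzj : (ν j : ℂ) - z ≠ 0 := sub_ne_zero.2 (hz j).symm
    exact (Complex.tendsto_Gamma_mul_div_Gamma_mul hνj hzj).comp
      (Complex.tendsto_ofReal_nhdsNE_zero.mono_left (nhdsGT_le_nhdsNE 0))
  simpa using ((Complex.tendsto_Gamma_one_sub_ofReal_mul _).mono_left nhdsWithin_le_nhds).mul
    (tendsto_finsetProd _ hratio)
end

section
/- Let t > 0, a > 0, let ν₁, …, ν_N be distinct real numbers, m ∈ {1,…,N}, and let x' ∈ ℝ satisfy x' ≠ ν_m − n/a for every positive integer n. Then the function y ↦ e^{−y²/(2t)} · Φ_ν^{ν_m,a}(x' + iy) is Lebesgue integrable on ℝ. -/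
/-!
On the line `Re z = x'` the function `Φ_ν^{ν_m,a}` grows at most exponentially in `|Im z|`.
The factor `Γ(1 - a(ν_m - z))` is bounded on vertical lines away from the real axis: shift the
argument into the right half-plane with `Γ(w + 1) = w Γ(w)`, where `|w| ≥ 1`, and compare with
the Euler integral. Each `1 / Γ(a(ν_j - z))` is `O(e^{πa|Im z|})` by the reflection formula
`1 / Γ(w) = Γ(1 - w) sin(πw) / π`. As `x'` avoids the poles, `y ↦ Φ(x' + iy)` is continuous,
so the bound holds for all `y`, and the Gaussian factor absorbs the exponential.
-/

open Finset MeasureTheory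

open scoped Real

namespace Complex

theorem norm_Gamma_le_Gamma_re {s : ℂ} (hs : 0 < s.re) : ‖Gamma s‖ ≤ Real.Gamma s.re := by
  rw [Gamma_eq_integral hs, Real.Gamma_eq_integral hs, GammaIntegral]
  refine (norm_integral_le_integral_norm _).trans_eq <|
    setIntegral_congr_fun measurableSet_Ioi fun x hx => ?_
  rw [norm_mul, norm_real, Real.norm_of_nonneg (Real.exp_pos _).le,
    norm_cpow_eq_rpow_re_of_pos hx, sub_re, one_re]

theorem norm_Gamma_le_norm_Gamma_add_natCast {z : ℂ} (hz : 1 ≤ |z.im|) (k : ℕ) :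
    ‖Gamma z‖ ≤ ‖Gamma (z + k)‖ := by
  induction k with
  | zero => simp
  | succ k ih =>
    have hzk : 1 ≤ ‖z + k‖ := hz.trans (by simpa using abs_im_le_norm (z + k))
    have hzk0 : z + k ≠ 0 := norm_pos_iff.mp (one_pos.trans_le hzk)
    rw [Nat.cast_succ, ← add_assoc, Gamma_add_one _ hzk0, norm_mul]
    exact ih.trans (le_mul_of_one_le_left (norm_nonneg _) hzk)

theorem exists_norm_Gamma_le_of_re_eq (c : ℝ) :
    ∃ K, ∀ z : ℂ, z.re = c → 1 ≤ |z.im| → ‖Gamma z‖ ≤ K := by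
  obtain ⟨k, hk⟩ := exists_nat_gt (-c)
  refine ⟨Real.Gamma (c + k), fun z hre him => ?_⟩
  have hre' : (z + k).re = c + k := by simp [hre]
  calc ‖Gamma z‖ ≤ ‖Gamma (z + k)‖ := norm_Gamma_le_norm_Gamma_add_natCast him k
    _ ≤ Real.Gamma (c + k) := hre' ▸ norm_Gamma_le_Gamma_re (by linarith)

theorem norm_sin_le_exp_abs_im (w : ℂ) : ‖sin w‖ ≤ Real.exp |w.im| := by
  have hexp (u : ℂ) (hu : |u.re| = |w.im|) : ‖exp u‖ ≤ Real.exp |w.im| := by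
    rw [norm_exp, ← hu]; exact Real.exp_le_exp.2 (le_abs_self _)
  have h2 : ‖(2 : ℂ)‖ = 2 := by norm_num
  rw [sin, norm_div, norm_mul, norm_I, mul_one, h2, div_le_iff₀ two_pos]
  calc ‖exp (-w * I) - exp (w * I)‖ ≤ ‖exp (-w * I)‖ + ‖exp (w * I)‖ := norm_sub_le _ _
    _ ≤ Real.exp |w.im| + Real.exp |w.im| := by
      gcongr <;> exact hexp _ (by simp [abs_neg])
    _ = Real.exp |w.im| * 2 := by ring

theorem inv_Gamma_eq_Gamma_one_sub_mul_sin {z : ℂ} (hz : z.im ≠ 0) :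
    (Gamma z)⁻¹ = Gamma (1 - z) * sin (π * z) / π := by
  have hπ : (π : ℂ) ≠ 0 := ofReal_ne_zero.2 Real.pi_ne_zero
  have hsin : sin (π * z) ≠ 0 := by
    rw [sin_ne_zero_iff]
    intro k hk
    simpa [Real.pi_ne_zero, hz] using congrArg im hk
  refine inv_eq_of_mul_eq_one_right ?_
  rw [mul_div_assoc', ← mul_assoc, Gamma_mul_Gamma_one_sub]
  field_simp

theorem exists_norm_inv_Gamma_le_of_re_eq (c : ℝ) :
    ∃ K, ∀ z : ℂ, z.re = c → 1 ≤ |z.im| → ‖(Gamma z)⁻¹‖ ≤ K * Real.exp (π * |z.im|) := by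
  obtain ⟨K, hK⟩ := exists_norm_Gamma_le_of_re_eq (1 - c)
  refine ⟨K / π, fun z hre him => ?_⟩
  have hz : z.im ≠ 0 := by rintro h; simp [h] at him; linarith
  have hΓ : ‖Gamma (1 - z)‖ ≤ K := hK _ (by simp [hre]) (by simpa using him)
  have hsin : ‖sin (π * z)‖ ≤ Real.exp (π * |z.im|) := by
    simpa [abs_mul, abs_of_pos Real.pi_pos] using norm_sin_le_exp_abs_im (π * z)
  rw [inv_Gamma_eq_Gamma_one_sub_mul_sin hz, norm_div, norm_mul, norm_real,
    Real.norm_of_nonneg Real.pi_pos.le, div_mul_eq_mul_div]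
  gcongr
  exact (norm_nonneg _).trans hΓ

end Complex

theorem exists_norm_le_mul_exp_abs_of_continuous {E : Type*} [NormedAddCommGroup E] {f : ℝ → E}
    (hf : Continuous f) {R C A : ℝ} (hA : 0 ≤ A)
    (hbound : ∀ y, R ≤ |y| → ‖f y‖ ≤ C * Real.exp (A * |y|)) :
    ∃ D, ∀ y, ‖f y‖ ≤ D * Real.exp (A * |y|) := by
  obtain ⟨B, hB⟩ := (isCompact_Icc (a := -R) (b := R)).exists_bound_of_continuousOn hf.continuousOn
  refine ⟨max C 0 + max B 0, fun y => ?_⟩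
  have hexp : 1 ≤ Real.exp (A * |y|) := Real.one_le_exp (by positivity)
  rcases le_or_gt R |y| with hy | hy
  · exact (hbound y hy).trans <| by gcongr; linarith [le_max_left C 0, le_max_right B 0]
  · calc ‖f y‖ ≤ B := hB y (abs_le.mp hy.le)
      _ ≤ (max C 0 + max B 0) * 1 := by linarith [le_max_right C 0, le_max_left B 0]
      _ ≤ (max C 0 + max B 0) * Real.exp (A * |y|) := by gcongr

theorem integrable_exp_neg_sq_div_mul_exp_abs {t : ℝ} (ht : 0 < t) (A : ℝ) :
    Integrable fun y : ℝ => Real.exp (-y ^ 2 / (2 * t)) * Real.exp (A * |y|) := by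
  refine ((integrable_exp_neg_mul_sq (b := 1 / (4 * t)) (by positivity)).const_mul
    (Real.exp (A ^ 2 * t))).mono' (by fun_prop) (.of_forall fun y => ?_)
  -- completing the square: `A|y| - y²/(2t) = A²t - y²/(4t) - (|y| - 2At)²/(4t)`
  have hsq : A * |y| - y ^ 2 / (2 * t) ≤ A ^ 2 * t + -(1 / (4 * t)) * y ^ 2 := by
    have : 0 ≤ (|y| - 2 * A * t) ^ 2 / (4 * t) := by positivity
    have e : (|y| - 2 * A * t) ^ 2 / (4 * t) =
        A ^ 2 * t + -(1 / (4 * t)) * y ^ 2 - (A * |y| - y ^ 2 / (2 * t)) := by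
      rw [← sq_abs y]; field_simp; ring
    linarith
  rw [Real.norm_of_nonneg (by positivity), ← Real.exp_add, ← Real.exp_add]
  exact Real.exp_le_exp.2 (by linarith [neg_div (2 * t) (y ^ 2)])

theorem integrable_exp_neg_sq_div_mul_of_norm_le {f : ℝ → ℂ} {t R C A : ℝ} (ht : 0 < t)
    (hf : Continuous f) (hA : 0 ≤ A) (hbound : ∀ y, R ≤ |y| → ‖f y‖ ≤ C * Real.exp (A * |y|)) :
    Integrable fun y : ℝ => (Real.exp (-y ^ 2 / (2 * t)) : ℂ) * f y := by
  obtain ⟨D, hD⟩ := exists_norm_le_mul_exp_abs_of_continuous hf hA hbound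
  refine ((integrable_exp_neg_sq_div_mul_exp_abs ht A).const_mul D).mono' (by fun_prop)
    (.of_forall fun y => ?_)
  rw [norm_mul, Complex.norm_real, Real.norm_of_nonneg (Real.exp_pos _).le, mul_left_comm]
  exact mul_le_mul_of_nonneg_left (hD y) (Real.exp_pos _).le

/-- `Φ_ν^{ν_m,a}`. -/
noncomputable def phiLift {N : ℕ} (a : ℝ) (ν : Fin N → ℝ) (m : Fin N) (z : ℂ) : ℂ :=
  Complex.Gamma (1 - a * (ν m - z)) *
    ∏ j ∈ univ.erase m, Complex.Gamma (a * (ν j - ν m)) / Complex.Gamma (a * (ν j - z))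

section phiLift

variable {N : ℕ} {a : ℝ} (ν : Fin N → ℝ) (m : Fin N)

theorem continuousAt_phiLift (ha : a ≠ 0) {z : ℂ} (hz : ∀ n : ℕ, 0 < n → z ≠ ν m - n / a) :
    ContinuousAt (phiLift a ν m) z := by
  refine ContinuousAt.mul ?_ <| continuous_finsetProd _ (fun j _ => ?_) |>.continuousAt
  · refine ContinuousAt.comp (g := Complex.Gamma) ?_ (by fun_prop)
    refine (Complex.differentiableAt_Gamma _ fun n hn => hz (n + 1) n.succ_pos ?_).continuousAt
    have ha' : (a : ℂ) ≠ 0 := Complex.ofReal_ne_zero.2 ha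
    field_simp
    push_cast
    linear_combination hn
  · have hinv : Continuous fun s => (Complex.Gamma s)⁻¹ := by
      simpa only [one_div] using Complex.differentiable_one_div_Gamma.continuous
    simp_rw [div_eq_mul_inv]
    exact continuous_const.mul (hinv.comp (f := fun z : ℂ => (a : ℂ) * (ν j - z)) (by fun_prop))

theorem continuous_phiLift_vertical (ha : a ≠ 0) {x' : ℝ}
    (hx' : ∀ n : ℕ, 0 < n → x' ≠ ν m - (n : ℝ) / a) :
    Continuous fun y : ℝ => phiLift a ν m (x' + Complex.I * y) := by
  refine continuous_iff_continuousAt.2 fun y => ContinuousAt.comp (g := phiLift a ν m)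
    (continuousAt_phiLift ν m ha fun n hn h => ?_) (by fun_prop)
  -- the poles are real, so only `y = 0` can hit one
  have hy : y = 0 := by simpa using congrArg Complex.im h
  refine hx' n hn ?_
  simpa [hy] using congrArg Complex.re h

theorem exists_norm_phiLift_vertical_le (ha : 0 < a) (x' : ℝ) :
    ∃ C A, 0 ≤ A ∧ ∀ y : ℝ, a⁻¹ ≤ |y| →
      ‖phiLift a ν m (x' + Complex.I * y)‖ ≤ C * Real.exp (A * |y|) := by
  obtain ⟨K₀, hK₀⟩ := Complex.exists_norm_Gamma_le_of_re_eq (1 - a * (ν m - x'))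
  choose K hK using fun j => Complex.exists_norm_inv_Gamma_le_of_re_eq (a * (ν j - x'))
  set G := fun j => ‖Complex.Gamma (a * (ν j - ν m))‖ * K j
  refine ⟨K₀ * ∏ j ∈ univ.erase m, G j, π * a * (univ.erase m).card, by positivity,
    fun y hy => ?_⟩
  have hay : 1 ≤ a * |y| := by rwa [inv_le_iff_one_le_mul₀ ha, mul_comm] at hy
  have h₀ : ‖Complex.Gamma (1 - a * (ν m - (x' + Complex.I * y)))‖ ≤ K₀ :=
    hK₀ _ (by simp) (by simpa [abs_mul, abs_of_pos ha] using hay)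
  have hj : ∀ j ∈ univ.erase m, ‖Complex.Gamma (a * (ν j - ν m)) /
      Complex.Gamma (a * (ν j - (x' + Complex.I * y)))‖ ≤ G j * Real.exp (π * (a * |y|)) := by
    intro j _
    rw [div_eq_mul_inv, norm_mul, mul_assoc]
    gcongr
    have hinv := hK j (a * (ν j - (x' + Complex.I * y))) (by simp)
      (by simpa [abs_mul, abs_of_pos ha] using hay)
    simpa [abs_mul, abs_of_pos ha] using hinv
  calc ‖phiLift a ν m (x' + Complex.I * y)‖
      ≤ K₀ * ∏ j ∈ univ.erase m, (G j * Real.exp (π * (a * |y|))) := by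
        rw [phiLift, norm_mul, norm_prod]
        exact mul_le_mul h₀ (prod_le_prod (fun _ _ => norm_nonneg _) hj)
          (prod_nonneg fun _ _ => norm_nonneg _) ((norm_nonneg _).trans h₀)
    _ = (K₀ * ∏ j ∈ univ.erase m, G j) * Real.exp (π * a * (univ.erase m).card * |y|) := by
        rw [prod_mul_distrib, prod_const, ← Real.exp_nat_mul, mul_assoc]
        ring_nf

end phiLift

theorem phi_lifting_gaussian_integrable_general (N : ℕ) (t a : ℝ) (ht : 0 < t) (ha : 0 < a)
    (ν : Fin N → ℝ) (m : Fin N) (x' : ℝ)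
    (hx' : ∀ n : ℕ, 0 < n → x' ≠ ν m - (n : ℝ) / a) :
    Integrable (fun y : ℝ =>
      (Real.exp (-y ^ 2 / (2 * t)) : ℂ) *
        (Complex.Gamma (1 - (a : ℂ) * ((ν m : ℂ) - ((x' : ℂ) + Complex.I * (y : ℂ)))) *
          ∏ j ∈ univ.erase m,
            Complex.Gamma ((a : ℂ) * ((ν j : ℂ) - (ν m : ℂ))) /
              Complex.Gamma ((a : ℂ) * ((ν j : ℂ) - ((x' : ℂ) + Complex.I * (y : ℂ)))))) := by
  obtain ⟨C, A, hA, hbound⟩ := exists_norm_phiLift_vertical_le ν m ha x'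
  exact integrable_exp_neg_sq_div_mul_of_norm_le ht
    (continuous_phiLift_vertical ν m ha.ne' hx') hA hbound

/-- For `t > 0` and `x'` avoiding the poles `ν_m − n/a`, the function
`y ↦ e^{−y²/(2t)} Φ_ν^{ν_m,a}(x' + iy)` is Lebesgue integrable on `ℝ`. -/
theorem phi_lifting_gaussian_integrable (N : ℕ) (t a : ℝ) (ht : 0 < t) (ha : 0 < a)
    (ν : Fin N → ℝ) (hν : Function.Injective ν) (m : Fin N) (x' : ℝ)
    (hx' : ∀ n : ℕ, 0 < n → x' ≠ ν m - (n : ℝ) / a) :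
    Integrable (fun y : ℝ =>
      (Real.exp (-y ^ 2 / (2 * t)) : ℂ) *
        (Complex.Gamma (1 - (a : ℂ) * ((ν m : ℂ) - ((x' : ℂ) + Complex.I * (y : ℂ)))) *
          ∏ j ∈ univ.erase m,
            Complex.Gamma ((a : ℂ) * ((ν j : ℂ) - (ν m : ℂ))) /
              Complex.Gamma ((a : ℂ) * ((ν j : ℂ) - ((x' : ℂ) + Complex.I * (y : ℂ)))))) :=
  phi_lifting_gaussian_integrable_general N t a ht ha ν m x' hx'
end

section
/- Let N ≥ 1, let f₁, …, f_N, g₁, …, g_N : ℝ → ℂ and χ : ℝ → ℝ be measurable, and suppose that for all j, k the function x ↦ χ(x)·g_j(x)·f_k(x) is Lebesgue integrable on ℝ. Define K(x, x') = Σ_{j=1}^N f_j(x)·g_j(x') and B_{jk} = ∫_ℝ χ(x)·g_j(x)·f_k(x) dx. Then Σ_{L=0}^N ((−1)^L / L!) ∫_{ℝ^L} ∏_{i=1}^L χ(x_i) · det_{1 ≤ i,k ≤ L}[K(x_i, x_k)] dx₁⋯dx_L = det_{1 ≤ j,k ≤ N}[δ_{jk} − B_{jk}], where the L = 0 term is 1.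 (The Fredholm determinant of a rank-N kernel reduces to an N × N matrix determinant.) -/
/-!
Factor the kernel matrix `[K(x_i, x_k)]` as `[f_j(x_i)] * [g_j(x_k)]` and expand its determinant
by multilinearity in the columns: it becomes a sum over maps `φ : Fin L → Fin N` of determinants
whose `i`-th row depends on `x_i` alone, and Fubini turns the integral of such a determinant into
the determinant `det [B (φ i) (φ k)]`. Non-injective `φ` contribute nothing and every `L`-element
subset of `Fin N` is the image of `L!` injective `φ`, so the `L`-th term of the series is the sum
of the `L × L` principal minors of `-B`; summed over `L` these give `det (1 - B)`.
-/

open Finset MeasureTheory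

noncomputable def Finset.imageEqEquivOfCardEq {n : Type*} [DecidableEq n] {L : ℕ}
    (s : Finset n) (hs : s.card = L) :
    {φ : Fin L → n // univ.image φ = s} ≃ (Fin L ≃ s) where
  toFun := fun ⟨φ, hφ⟩ =>
    Equiv.ofBijective (fun i => ⟨φ i, hφ ▸ mem_image_of_mem φ (mem_univ i)⟩) <| by
      rw [Fintype.bijective_iff_surjective_and_card, Fintype.card_fin, Fintype.card_coe, hs]
      refine ⟨fun y => ?_, rfl⟩
      obtain ⟨i, -, hi⟩ := mem_image.mp (hφ ▸ y.2 : (y : n) ∈ univ.image φ)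
      exact ⟨i, Subtype.ext hi⟩
  invFun e := ⟨fun i => e i, by
    ext y
    simp only [mem_image, mem_univ, true_and]
    exact ⟨fun ⟨i, hi⟩ => hi ▸ (e i).2, fun hy => ⟨e.symm ⟨y, hy⟩, by simp⟩⟩⟩
  left_inv _ := rfl
  right_inv e := by ext; rfl

namespace Matrix

variable {l m n R : Type*} [CommRing R]

theorem det_submatrix_eq_zero_of_not_injective [Fintype l] [DecidableEq l] (A : Matrix m n R)
    {φ : l → m} (hφ : ¬Function.Injective φ) (ψ : l → n) :
    (A.submatrix φ ψ).det = 0 := by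
  obtain ⟨i, j, hφij, hij⟩ := Function.not_injective_iff.mp hφ
  exact det_zero_of_row_eq hij (funext fun k => by simp [hφij])

variable [Fintype n]

section DecidableEq

variable [DecidableEq n]

theorem det_eq_sum_sign_mul_prod_apply (M : Matrix n n R) :
    M.det = ∑ σ : Equiv.Perm n, (Equiv.Perm.sign σ : R) * ∏ i, M i (σ i) := by
  rw [← det_transpose, det_apply']
  rfl

theorem det_add_one_eq_sum_det_submatrix (A : Matrix n n R) :
    (A + 1).det = ∑ s : Finset n, (A.submatrix ((↑) : s → n) (↑)).det := by
  rw [← Finset.sum_congr rfl fun s _ => det_piecewise_one_eq_submatrix_det A s]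
  exact (detRowAlternating : (n → R) [⋀^n]→ₗ[R] R).map_add_univ A.row (1 : Matrix n n R).row

theorem sum_fin_det_submatrix_eq_factorial_mul (A : Matrix n n R) (L : ℕ) :
    ∑ φ : Fin L → n, (A.submatrix φ φ).det =
      L.factorial * ∑ s ∈ powersetCard L (univ : Finset n),
        (A.submatrix ((↑) : s → n) (↑)).det := by
  rw [← Fintype.sum_fiberwise (fun φ : Fin L → n => univ.image φ), powersetCard_eq_filter,
    sum_filter, mul_sum]
  refine sum_congr rfl fun s _ => ?_
  split_ifs with hs
  · rw [← Fintype.sum_equiv (imageEqEquivOfCardEq s hs).symm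
      (fun e => ((A.submatrix ((↑) : s → n) (↑)).submatrix e e).det) _ fun _ => rfl]
    simp only [det_submatrix_equiv_self, sum_const, card_univ,
      Fintype.card_equiv (equivFinOfCardEq hs).symm, Fintype.card_fin, nsmul_eq_mul]
  · rw [mul_zero]
    refine sum_eq_zero fun (φ : {φ : Fin L → n // univ.image φ = s}) _ =>
      det_submatrix_eq_zero_of_not_injective A (fun hinj => hs ?_) φ.1
    rw [← φ.2, card_image_of_injective _ hinj, card_fin]

theorem det_one_sub_eq_sum_range {K : Type*} [Field K] [CharZero K]
    (A : Matrix n n K) :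
    (1 - A).det = ∑ L ∈ range (Fintype.card n + 1),
      (-1) ^ L / L.factorial * ∑ φ : Fin L → n, (A.submatrix φ φ).det := by
  rw [sub_eq_neg_add, det_add_one_eq_sum_det_submatrix, ← powerset_univ, sum_powerset, card_univ]
  refine sum_congr rfl fun L _ => ?_
  rw [sum_fin_det_submatrix_eq_factorial_mul, ← mul_assoc,
    div_mul_cancel₀ _ (Nat.cast_ne_zero.mpr L.factorial_ne_zero), mul_sum]
  refine sum_congr rfl fun s hs => ?_
  simp only [submatrix_neg, Pi.neg_apply, det_neg, Fintype.card_coe, (mem_powersetCard.mp hs).2]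

end DecidableEq

variable [Fintype m] [DecidableEq m]

theorem det_mul_eq_sum_prod_mul_det_submatrix (A : Matrix m n R) (B : Matrix n m R) :
    (A * B).det = ∑ φ : m → n, (∏ k, B (φ k) k) * (A.submatrix id φ).det := by
  have hrows : (A * B)ᵀ = fun k => ∑ j, B j k • Aᵀ j := by
    ext k i
    simp [mul_apply, mul_comm]
  rw [← det_transpose, hrows]
  refine ((detRowAlternating : (m → R) [⋀^m]→ₗ[R] R).map_sum _).trans
    (sum_congr rfl fun φ _ => ?_)
  rw [MultilinearMap.map_smul_univ, smul_eq_mul, ← det_transpose (A.submatrix id φ)]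
  rfl

theorem prod_mul_det_sum_mul_eq_sum_det {X : Type*} (χ : X → R) (f g : n → X → R)
    (x : m → X) :
    (∏ i, χ (x i)) * (of fun i k => ∑ j, f j (x i) * g j (x k)).det =
      ∑ φ : m → n, (of fun i k => χ (x i) * g (φ i) (x i) * f (φ k) (x i)).det := by
  have hfactor : (of fun i k => ∑ j, f j (x i) * g j (x k)) =
      (of fun i j => f j (x i)) * of fun j k => g j (x k) := by
    ext i k
    simp [mul_apply]
  rw [hfactor, det_mul_eq_sum_prod_mul_det_submatrix, mul_sum]
  refine sum_congr rfl fun φ _ => ?_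
  rw [← mul_assoc, ← prod_mul_distrib, ← det_mul_column]
  rfl

end Matrix

namespace MeasureTheory

section RowIntegrals

variable {ι 𝕜 : Type*} [Fintype ι] [DecidableEq ι] [RCLike 𝕜] {E : ι → Type*}
  [∀ i, MeasurableSpace (E i)] {μ : ∀ i, Measure (E i)} [∀ i, SigmaFinite (μ i)]
  {H : (i : ι) → ι → E i → 𝕜}

theorem Integrable.det_of_apply (hH : ∀ i k, Integrable (H i k) (μ i)) :
    Integrable (fun x => (Matrix.of fun i k => H i k (x i)).det) (Measure.pi μ) := by
  simp only [Matrix.det_eq_sum_sign_mul_prod_apply, Matrix.of_apply]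
  exact integrable_finsetSum _ fun σ _ =>
    (Integrable.fintype_prod_dep fun i => hH i (σ i)).const_mul _

theorem integral_det_eq_det_integral (hH : ∀ i k, Integrable (H i k) (μ i)) :
    ∫ x, (Matrix.of fun i k => H i k (x i)).det ∂Measure.pi μ =
      (Matrix.of fun i k => ∫ y, H i k y ∂μ i).det := by
  simp only [Matrix.det_eq_sum_sign_mul_prod_apply, Matrix.of_apply]
  rw [integral_finsetSum _ fun σ _ =>
    (Integrable.fintype_prod_dep fun i => hH i (σ i)).const_mul _]
  simp_rw [integral_const_mul, integral_fintype_prod_eq_prod]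

end RowIntegrals

theorem integral_prod_mul_det_sum_mul_eq_sum_det_submatrix {m n 𝕜 X : Type*} [Fintype m]
    [DecidableEq m] [Fintype n] [RCLike 𝕜] [MeasurableSpace X] {μ : Measure X}
    [SigmaFinite μ] (χ : X → 𝕜) (f g : n → X → 𝕜)
    (hint : ∀ j k, Integrable (fun x => χ x * g j x * f k x) μ) :
    ∫ x : m → X, (∏ i, χ (x i)) * (Matrix.of fun i k => ∑ j, f j (x i) * g j (x k)).det
        ∂(Measure.pi fun _ => μ) =
      ∑ φ : m → n,
        ((Matrix.of fun j k => ∫ x, χ x * g j x * f k x ∂μ).submatrix φ φ).det := by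
  simp_rw [Matrix.prod_mul_det_sum_mul_eq_sum_det]
  rw [integral_finsetSum _ fun φ _ => Integrable.det_of_apply fun i k => hint (φ i) (φ k)]
  exact sum_congr rfl fun φ _ => integral_det_eq_det_integral fun i k => hint (φ i) (φ k)

end MeasureTheory

theorem fredholm_det_finite_rank_general (N : ℕ)
    (f g : Fin N → ℝ → ℂ) (χ : ℝ → ℝ)
    (hint : ∀ j k : Fin N, Integrable (fun x : ℝ => (χ x : ℂ) * g j x * f k x)) :
    ∑ L ∈ Finset.range (N + 1),
        ((-1 : ℂ) ^ L / (Nat.factorial L : ℂ)) *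
          ∫ x : Fin L → ℝ,
            (∏ i : Fin L, (χ (x i) : ℂ)) *
              Matrix.det (Matrix.of fun i k : Fin L =>
                ∑ j : Fin N, f j (x i) * g j (x k)) =
      Matrix.det (Matrix.of fun j k : Fin N =>
        (if j = k then (1 : ℂ) else 0) - ∫ x : ℝ, (χ x : ℂ) * g j x * f k x) := by
  have hmatrix : (Matrix.of fun j k : Fin N =>
      (if j = k then (1 : ℂ) else 0) - ∫ x : ℝ, (χ x : ℂ) * g j x * f k x) =
      1 - Matrix.of fun j k => ∫ x : ℝ, (χ x : ℂ) * g j x * f k x := by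
    ext j k
    simp [Matrix.one_apply]
  rw [hmatrix, Matrix.det_one_sub_eq_sum_range, Fintype.card_fin]
  refine sum_congr rfl fun L _ => ?_
  rw [volume_pi,
    integral_prod_mul_det_sum_mul_eq_sum_det_submatrix (fun x => (χ x : ℂ)) f g hint]

/-- The (terminating) Fredholm expansion of `Det[δ(x−x') − K(x,x')χ(x')]` for the
finite-rank kernel `K(x,x') = Σ_j f_j(x) g_j(x')` reduces to the `N × N` determinant
`det[δ_{jk} − B_{jk}]` with `B_{jk} = ∫ χ(x) g_j(x) f_k(x) dx`. -/
theorem fredholm_det_finite_rank (N : ℕ) (hN : 1 ≤ N)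
    (f g : Fin N → ℝ → ℂ) (χ : ℝ → ℝ)
    (hf : ∀ j, Measurable (f j)) (hg : ∀ j, Measurable (g j)) (hχ : Measurable χ)
    (hint : ∀ j k : Fin N, Integrable (fun x : ℝ => (χ x : ℂ) * g j x * f k x)) :
    ∑ L ∈ Finset.range (N + 1),
        ((-1 : ℂ) ^ L / (Nat.factorial L : ℂ)) *
          ∫ x : Fin L → ℝ,
            (∏ i : Fin L, (χ (x i) : ℂ)) *
              Matrix.det (Matrix.of fun i k : Fin L =>
                ∑ j : Fin N, f j (x i) * g j (x k)) =
      Matrix.det (Matrix.of fun j k : Fin N =>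
        (if j = k then (1 : ℂ) else 0) - ∫ x : ℝ, (χ x : ℂ) * g j x * f k x) :=
  fredholm_det_finite_rank_general N f g χ hint
end

section
/- Let N ≥ 1, let c₁, …, c_N be real numbers, and let a₁, …, a_{N−1} be real numbers. For 1 ≤ j, ℓ ≤ N define the complex number M_{jℓ} = ∫_ℝ (2π)^{−1/2} · exp(−(u + i c_j)²/2) · ∏_{m=1}^{ℓ−1} (i u − i a_m) du (with the empty product equal to 1 for ℓ = 1). Then det_{1 ≤ j,ℓ ≤ N}[M_{jℓ}] = ∏_{1 ≤ j < ℓ ≤ N} (c_ℓ − c_j). (Each entry is a multiple Hermite polynomial of type II, a monic polynomial of degree ℓ−1 in c_j, so the determinant collapses to a Vandermonde determinant.) -/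
/-! Put `z = u + i c`. Then `i u - i a_m = i z + (c - i a_m)`, so Taylor-expanding
`P_ℓ = ∏_{m<ℓ} (X - i a_m)` at `c = c_j` writes `M_{jℓ}` as
`∑_k (P_ℓ^{(k)}(c_j) / k!) iᵏ μ_k(c_j) / √(2π)` with `μ_k(c) = ∫ zᵏ e^{-z²/2} du`.
Integration by parts gives `μ_{k+2} = (k+1) μ_k` and `μ_1 = 0`, and the shifted Gaussian
integral gives `μ_0 = √(2π)`: the `μ_k(c)` do not depend on `c`. Hence `M_{jℓ} = Q_ℓ(c_j)` for
the polynomial `Q_ℓ = P_ℓ + (terms of lower degree)`, which is monic of degree `ℓ`, and column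
operations reduce `det M` to the Vandermonde determinant. -/

open Finset MeasureTheory Complex Polynomial
open scoped Real

noncomputable def gaussianMonomial (k : ℕ) (z : ℂ) : ℂ := z ^ k * cexp (-z ^ 2 / 2)

/-- At `k = 0` the first term vanishes, so the truncated `k - 1` is harmless. -/
theorem hasDerivAt_gaussianMonomial (k : ℕ) (z : ℂ) :
    HasDerivAt (gaussianMonomial k)
      (k * gaussianMonomial (k - 1) z - gaussianMonomial (k + 1) z) z := by
  have hexp : HasDerivAt (fun z => cexp (-z ^ 2 / 2)) (-z * cexp (-z ^ 2 / 2)) z :=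
    ((hasDerivAt_pow 2 z).neg.div_const 2).cexp.congr_deriv
      (by simp only [Pi.neg_apply]; push_cast; ring)
  refine ((hasDerivAt_pow k z).mul hexp).congr_deriv ?_
  simp only [gaussianMonomial]
  ring

theorem integrable_abs_pow_add_const_mul_exp_neg_mul_sq {b : ℝ} (hb : 0 < b) (k : ℕ) (C : ℝ) :
    Integrable fun u : ℝ => (|u| ^ k + C) * Real.exp (-b * u ^ 2) := by
  have hpow :=
    (integrable_rpow_mul_exp_neg_mul_sq hb (s := k) (by linarith [k.cast_nonneg (α := ℝ)])).norm
  simp only [Real.rpow_natCast, norm_mul, norm_pow, Real.norm_eq_abs, Real.abs_exp] at hpow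
  simp_rw [add_mul]
  exact hpow.add ((integrable_exp_neg_mul_sq hb).const_mul C)

theorem norm_gaussianMonomial_add_mul_I_le (k : ℕ) (c u : ℝ) :
    ‖gaussianMonomial k (u + I * c)‖ ≤
      2 ^ (k - 1) * Real.exp (c ^ 2 / 2) * ((|u| ^ k + |c| ^ k) * Real.exp (-(1 / 2) * u ^ 2)) := by
  have hexp : ‖cexp (-((u : ℂ) + I * c) ^ 2 / 2)‖ =
      Real.exp (c ^ 2 / 2) * Real.exp (-(1 / 2) * u ^ 2) := by
    rw [← Real.exp_add, norm_exp]
    congr 1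
    simp only [sq, div_ofNat_re, neg_re, mul_re, add_re, ofReal_re, I_re, zero_mul, I_im,
      ofReal_im, mul_zero, sub_self, add_zero, add_im, mul_im, one_mul, zero_add]
    ring
  have hpow : ‖(u : ℂ) + I * c‖ ^ k ≤ 2 ^ (k - 1) * (|u| ^ k + |c| ^ k) := by
    refine (pow_le_pow_left₀ (norm_nonneg _) ?_ k).trans
      (add_pow_le (abs_nonneg u) (abs_nonneg c) k)
    refine (norm_add_le _ _).trans ?_
    simp
  rw [gaussianMonomial, norm_mul, norm_pow, hexp]
  calc _ ≤ 2 ^ (k - 1) * (|u| ^ k + |c| ^ k) *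
          (Real.exp (c ^ 2 / 2) * Real.exp (-(1 / 2) * u ^ 2)) :=
        mul_le_mul_of_nonneg_right hpow (by positivity)
    _ = _ := by ring

theorem integrable_gaussianMonomial_add_mul_I (k : ℕ) (c : ℝ) :
    Integrable fun u : ℝ => gaussianMonomial k (u + I * c) :=
  ((integrable_abs_pow_add_const_mul_exp_neg_mul_sq one_half_pos k _).const_mul _).mono'
    (by unfold gaussianMonomial; fun_prop : Continuous _).aestronglyMeasurable
    (.of_forall (norm_gaussianMonomial_add_mul_I_le k c))

theorem integral_gaussianMonomial_succ (k : ℕ) (c : ℝ) :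
    ∫ u : ℝ, gaussianMonomial (k + 1) (u + I * c) =
      k * ∫ u : ℝ, gaussianMonomial (k - 1) (u + I * c) := by
  have hderiv (u : ℝ) : HasDerivAt (fun u : ℝ => gaussianMonomial k (u + I * c))
      (k * gaussianMonomial (k - 1) (u + I * c) - gaussianMonomial (k + 1) (u + I * c)) u :=
    ((hasDerivAt_gaussianMonomial k _).comp_add_const _ _).comp_ofReal
  have hint (n : ℕ) := integrable_gaussianMonomial_add_mul_I n c
  have h := integral_eq_zero_of_hasDerivAt_of_integrable hderiv
    (((hint _).const_mul _).sub (hint _)) (hint k)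
  rw [integral_sub ((hint _).const_mul _) (hint _), integral_const_mul, sub_eq_zero] at h
  exact h.symm

/-- The moments `𝔼[Zᵏ]` of a standard normal `Z`. -/
noncomputable def gaussianMoment : ℕ → ℂ
  | 0 => 1
  | 1 => 0
  | k + 2 => (k + 1) * gaussianMoment k

theorem integral_gaussianMonomial_add_mul_I (c : ℝ) :
    ∀ k, ∫ u : ℝ, gaussianMonomial k (u + I * c) = √(2 * π) * gaussianMoment k
  | 0 => by
    have h := GaussianFourier.integral_cexp_neg_mul_sq_add_real_mul_I (b := 1 / 2) (by simp) c
    simp only [gaussianMonomial, pow_zero, one_mul, gaussianMoment, mul_one]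
    convert h using 1
    · congr 1 with u
      ring_nf
    · rw [Real.sqrt_eq_rpow, ofReal_cpow (by positivity)]
      push_cast
      ring_nf
  | 1 => by simpa [gaussianMoment] using integral_gaussianMonomial_succ 0 c
  | k + 2 => by
    rw [integral_gaussianMonomial_succ, Nat.add_sub_cancel,
      integral_gaussianMonomial_add_mul_I c k, gaussianMoment]
    push_cast
    ring

section HasseDeriv

variable {R : Type*} [CommRing R]

theorem degree_sum_C_mul_hasseDeriv_sub_lt (P : R[X]) {w : ℕ → R} (hw : w 0 = 1) :
    (∑ k ∈ range (P.natDegree + 1), C (w k) * hasseDeriv k P - P).degree < P.natDegree := by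
  rw [sum_range_succ', hasseDeriv_zero', hw, C_1, one_mul, add_sub_cancel_right,
    ← mem_degreeLT]
  refine sum_mem fun k hk => ?_
  rw [C_mul']
  refine Submodule.smul_mem _ _ (mem_degreeLT.2 (degree_le_natDegree.trans_lt ?_))
  have hle := natDegree_hasseDeriv_le P (k + 1)
  have hk := mem_range.1 hk
  exact_mod_cast (by omega : (hasseDeriv (k + 1) P).natDegree < P.natDegree)

theorem Polynomial.Monic.sum_C_mul_hasseDeriv {P : R[X]} (hP : P.Monic) {w : ℕ → R}
    (hw : w 0 = 1) : (∑ k ∈ range (P.natDegree + 1), C (w k) * hasseDeriv k P).Monic := by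
  nontriviality R
  rw [← add_sub_cancel P (∑ k ∈ range _, _)]
  refine hP.add_of_left ?_
  rw [degree_eq_natDegree hP.ne_zero]
  exact degree_sum_C_mul_hasseDeriv_sub_lt P hw

theorem Polynomial.Monic.natDegree_sum_C_mul_hasseDeriv [Nontrivial R] {P : R[X]}
    (hP : P.Monic) {w : ℕ → R} (hw : w 0 = 1) :
    (∑ k ∈ range (P.natDegree + 1), C (w k) * hasseDeriv k P).natDegree = P.natDegree := by
  rw [← add_sub_cancel P (∑ k ∈ range _, _), natDegree_add_eq_left_of_degree_lt]
  rw [degree_eq_natDegree hP.ne_zero]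
  exact degree_sum_C_mul_hasseDeriv_sub_lt P hw

end HasseDeriv

/-- `gaussianAverage P` is `x ↦ 𝔼[P(x + iZ)]` for a standard normal `Z`; it sends `Xⁿ` to the
Hermite polynomial `Heₙ`. -/
noncomputable def gaussianAverage (P : ℂ[X]) : ℂ[X] :=
  ∑ k ∈ range (P.natDegree + 1), C (I ^ k * gaussianMoment k) * hasseDeriv k P

theorem monic_gaussianAverage {P : ℂ[X]} (hP : P.Monic) :
    (gaussianAverage P).Monic :=
  hP.sum_C_mul_hasseDeriv (by simp [gaussianMoment])

theorem natDegree_gaussianAverage {P : ℂ[X]} (hP : P.Monic) :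
    (gaussianAverage P).natDegree = P.natDegree :=
  hP.natDegree_sum_C_mul_hasseDeriv (by simp [gaussianMoment])

theorem integral_mul_eval_I_mul_eq_eval_gaussianAverage (P : ℂ[X]) (c : ℝ) :
    ∫ u : ℝ, ((√(2 * π))⁻¹ : ℂ) * cexp (-((u : ℂ) + I * c) ^ 2 / 2) * P.eval (I * u) =
      (gaussianAverage P).eval (c : ℂ) := by
  have hexpand (u : ℝ) :
      ((√(2 * π))⁻¹ : ℂ) * cexp (-((u : ℂ) + I * c) ^ 2 / 2) * P.eval (I * u) =
        ∑ k ∈ range (P.natDegree + 1), (I ^ k * (hasseDeriv k P).eval (c : ℂ) / √(2 * π)) *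
          gaussianMonomial k (u + I * c) := by
    rw [show I * u = I * (u + I * c) + c by ring_nf; simp, ← taylor_eval, eval_eq_sum_range,
      natDegree_taylor, mul_sum]
    refine sum_congr rfl fun k _ => ?_
    rw [taylor_coeff, gaussianMonomial, mul_pow]
    ring
  simp_rw [hexpand]
  rw [integral_finsetSum _ fun k _ => (integrable_gaussianMonomial_add_mul_I k c).const_mul _,
    gaussianAverage, eval_finsetSum]
  refine sum_congr rfl fun k _ => ?_
  rw [integral_const_mul, integral_gaussianMonomial_add_mul_I, eval_mul, eval_C]
  field_simp

theorem prod_Ioi_eq_prod_filter_lt {ι M : Type*} [Fintype ι] [LinearOrder ι]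
    [LocallyFiniteOrderTop ι] [CommMonoid M] (f : ι → ι → M) :
    ∏ i, ∏ j ∈ Ioi i, f i j =
      ∏ p ∈ univ.filter (fun p : ι × ι => p.1 < p.2), f p.1 p.2 := by
  rw [prod_filter, Fintype.prod_prod_type]
  refine prod_congr rfl fun i _ => ?_
  rw [← prod_filter]
  congr 1
  ext j
  simp

theorem det_multiple_hermite_eq_vandermonde_general (N : ℕ)
    (c : Fin N → ℝ) (a : ℕ → ℝ) :
    Matrix.det (Matrix.of fun j l : Fin N =>
      ∫ u : ℝ,
        ((Real.sqrt (2 * Real.pi))⁻¹ : ℂ) *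
          Complex.exp (-((u : ℂ) + Complex.I * (c j : ℂ)) ^ 2 / 2) *
          ∏ m ∈ Finset.range (l : ℕ), (Complex.I * (u : ℂ) - Complex.I * (a m : ℂ))) =
      ∏ p ∈ Finset.univ.filter (fun p : Fin N × Fin N => p.1 < p.2),
        ((c p.2 : ℂ) - (c p.1 : ℂ)) := by
  set P : Fin N → ℂ[X] := fun l => ∏ m ∈ range l, (X - C (I * a m))
  have hP (l : Fin N) : (P l).Monic := monic_prod_of_monic _ _ fun m _ => monic_X_sub_C _
  have hdeg (l : Fin N) : (gaussianAverage (P l)).natDegree = l := by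
    rw [natDegree_gaussianAverage (hP l),
      natDegree_prod_of_monic _ _ fun m _ => monic_X_sub_C (I * a m)]
    simp only [natDegree_X_sub_C, sum_const, card_range, smul_eq_mul, mul_one]
  have hentry : (Matrix.of fun j l : Fin N => ∫ u : ℝ,
        ((√(2 * π))⁻¹ : ℂ) * cexp (-((u : ℂ) + I * (c j : ℂ)) ^ 2 / 2) *
          ∏ m ∈ range (l : ℕ), (I * (u : ℂ) - I * (a m : ℂ))) =
      Matrix.of fun j l => (gaussianAverage (P l)).eval (c j : ℂ) := by
    ext j l
    simp [← integral_mul_eval_I_mul_eq_eval_gaussianAverage, P, eval_prod]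
  rw [hentry, ← Matrix.det_eval_matrixOfPolynomials_eq_det_vandermonde _ _ hdeg
    fun l => monic_gaussianAverage (hP l), Matrix.det_vandermonde, prod_Ioi_eq_prod_filter_lt]

/-- The determinant of multiple Hermite polynomials of type II collapses to a
Vandermonde determinant: with
`M_{jℓ} = ∫ (2π)^{−1/2} e^{−(u+ic_j)²/2} ∏_{m=1}^{ℓ−1}(iu − ia_m) du`,
one has `det M = ∏_{j<ℓ}(c_ℓ − c_j)`.  (Here `a 0, …, a (N−2)` play the role of
the real numbers `a₁, …, a_{N−1}`; only these values enter the formula.) -/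
theorem det_multiple_hermite_eq_vandermonde (N : ℕ) (hN : 1 ≤ N)
    (c : Fin N → ℝ) (a : ℕ → ℝ) :
    Matrix.det (Matrix.of fun j l : Fin N =>
      ∫ u : ℝ,
        ((Real.sqrt (2 * Real.pi))⁻¹ : ℂ) *
          Complex.exp (-((u : ℂ) + Complex.I * (c j : ℂ)) ^ 2 / 2) *
          ∏ m ∈ Finset.range (l : ℕ), (Complex.I * (u : ℂ) - Complex.I * (a m : ℂ))) =
      ∏ p ∈ Finset.univ.filter (fun p : Fin N × Fin N => p.1 < p.2),
        ((c p.2 : ℂ) - (c p.1 : ℂ)) :=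
  det_multiple_hermite_eq_vandermonde_general N c a
end

section
/- Let κ be a positive integer and let v₁, …, v_κ ∈ ℂ satisfy v_j − v_k + 1 ≠ 0 for all j ≠ k. Then (1/κ!) · Σ_{σ ∈ S_κ} ∏_{1 ≤ p < q ≤ κ} (v_{σ(q)} − v_{σ(p)})/(v_{σ(q)} − v_{σ(p)} + 1) = det_{1 ≤ j,k ≤ κ}[1/(v_j + 1 − v_k)], where S_κ is the symmetric group on κ letters. (This symmetrization identity converts the moment formulas for the O'Connell process into determinantal form.) -/
/-!
Write `Δ = ∏_{p<q} (v_q - v_p)`, `Δ' = ∏_{p<q} (v_p - v_q)` and `D = ∏_{j,k} (v_j + 1 - v_k)`.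
The numerators of the `σ`-th term multiply to `sign σ · Δ`, and its denominator times
`∏_{p<q} (v_{σ p} - v_{σ q} + 1)` is `D`, whatever `σ` is. So the left side is `Δ / (κ! D)` times
the antisymmetrization of `∏_{p<q} (v_p - v_q + 1)`. Expanded into monomials, every product of fewer
than `κ choose 2` of the differences has two equal exponents in each monomial and antisymmetrizes to
zero; only the top part survives, and it antisymmetrizes to `κ! Δ'`. The right side is the Cauchy
determinant for `x = v + 1`, `y = v`, whose value is the same `Δ Δ' / D`.
-/

open Finset Equiv Function Matrix Polynomial
open scoped Nat

lemma Finset.card_choose_two_le_sum (s : Finset ℕ) : (#s).choose 2 ≤ ∑ x ∈ s, x := by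
  induction s using Finset.induction_on_max with
  | empty => simp
  | insert a s hlt ih =>
    have ha : a ∉ s := fun h => (hlt a h).false
    have hcard : #s ≤ a := by
      simpa using card_le_card fun x hx => mem_range.2 (hlt x hx)
    rw [card_insert_of_notMem ha, sum_insert ha, Nat.choose_succ_succ', Nat.choose_one_right,
      one_add_one_eq_two]
    omega

lemma card_choose_two_le_sum_of_injective {ι : Type*} [Fintype ι] {d : ι → ℕ} (hd : Injective d) :
    (Fintype.card ι).choose 2 ≤ ∑ i, d i := by
  have h := (univ.image d).card_choose_two_le_sum
  rwa [card_image_of_injective _ hd, card_univ, sum_image fun a _ b _ h => hd h] at h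

section Antisymmetrization

variable {ι R : Type*} [Fintype ι] [DecidableEq ι] [CommRing R]

lemma sum_sign_mul_prod_pow_eq_zero (x : ι → R) {d : ι → ℕ} (hd : ¬Injective d) :
    ∑ σ : Perm ι, (Perm.sign σ : R) * ∏ a, x (σ a) ^ d a = 0 := by
  obtain ⟨i, j, hij, hne⟩ := not_injective_iff.1 hd
  have h := det_zero_of_column_eq (M := of fun a b => x a ^ d b) hne fun k => by simp [hij]
  simpa [det_apply, Units.smul_def] using h

lemma sum_sign_mul_prod_comp_eq_zero {α : Type*} (x : ι → R) (T : Finset α) (g : α → ι)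
    (hT : #T < (Fintype.card ι).choose 2) :
    ∑ σ : Perm ι, (Perm.sign σ : R) * ∏ p ∈ T, x (σ (g p)) = 0 := by
  have hfiber (σ : Perm ι) : ∏ p ∈ T, x (σ (g p)) = ∏ a, x (σ a) ^ #{p ∈ T | g p = a} := by
    rw [← prod_fiberwise' T g fun a => x (σ a)]
    exact prod_congr rfl fun a _ => prod_const _
  simp_rw [hfiber]
  refine sum_sign_mul_prod_pow_eq_zero x fun hd => hT.not_ge ?_
  calc (Fintype.card ι).choose 2 ≤ ∑ a, #{p ∈ T | g p = a} :=
        card_choose_two_le_sum_of_injective hd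
    _ = #T := (card_eq_sum_card_fiberwise fun p _ => mem_univ (g p)).symm

lemma sum_sign_mul_prod_sub_eq_zero (x : ι → R) (T : Finset (ι × ι))
    (hT : #T < (Fintype.card ι).choose 2) :
    ∑ σ : Perm ι, (Perm.sign σ : R) * ∏ p ∈ T, (x (σ p.1) - x (σ p.2)) = 0 := by
  have hexpand (σ : Perm ι) : ∏ p ∈ T, (x (σ p.1) - x (σ p.2)) = ∑ t ∈ T.powerset,
      (-1) ^ #(T \ t) * ∏ q ∈ t.disjSum (T \ t), x (σ (Sum.elim Prod.fst Prod.snd q)) := by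
    simp_rw [sub_eq_add_neg, prod_add, prod_disjSum, prod_neg]
    exact sum_congr rfl fun t _ => by simp only [Sum.elim_inl, Sum.elim_inr]; ring
  simp_rw [hexpand, mul_sum]
  rw [sum_comm]
  refine sum_eq_zero fun t ht => ?_
  simp_rw [mul_left_comm (Perm.sign _ : R), ← mul_sum]
  rw [sum_sign_mul_prod_comp_eq_zero, mul_zero]
  rwa [card_disjSum, add_comm, card_sdiff_add_card_eq_card (mem_powerset.1 ht)]

end Antisymmetrization

def ltPairs (ι : Type*) [Fintype ι] [LinearOrder ι] : Finset (ι × ι) :=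
  univ.filter fun p => p.1 < p.2

section LtPairs

variable {ι M : Type*} [Fintype ι] [LinearOrder ι] [CommMonoid M]

@[simp]
lemma mem_ltPairs {p : ι × ι} : p ∈ ltPairs ι ↔ p.1 < p.2 := by
  simp [ltPairs]

lemma card_ltPairs : #(ltPairs ι) = (Fintype.card ι).choose 2 := by
  rw [ltPairs, ← univ_product_univ, card_product_filter_lt, card_univ]

lemma prod_prod_erase_eq_prod_ltPairs (f : ι → ι → M) :
    ∏ i, ∏ j ∈ univ.erase i, f i j = ∏ p ∈ ltPairs ι, f p.1 p.2 * f p.2 p.1 := by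
  have hne : ∏ i, ∏ j ∈ univ.erase i, f i j =
      ∏ p ∈ univ.filter fun p : ι × ι => p.1 ≠ p.2, f p.1 p.2 := by
    rw [prod_filter, Fintype.prod_prod_type]
    refine prod_congr rfl fun i _ => ?_
    rw [← prod_filter, filter_ne]
  have hgt : ∏ p ∈ ltPairs ι, f p.2 p.1 =
      ∏ p ∈ univ.filter fun p : ι × ι => p.2 < p.1, f p.1 p.2 :=
    prod_nbij' Prod.swap Prod.swap (by simp) (by simp) (by simp) (by simp) (by simp)
  rw [hne, prod_mul_distrib, hgt, ltPairs, ← prod_union]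
  · congr 1; ext p; simp [lt_or_lt_iff_ne]
  · exact disjoint_filter.2 fun p _ h h' => h.asymm h'

lemma prod_ltPairs_mul_swap (f : ι → ι → M) (hf : ∀ i, f i i = 1) :
    ∏ p ∈ ltPairs ι, f p.1 p.2 * f p.2 p.1 = ∏ i, ∏ j, f i j := by
  rw [← prod_prod_erase_eq_prod_ltPairs]
  exact prod_congr rfl fun i _ => prod_erase _ (hf i)

end LtPairs

section Vandermonde

variable {n : ℕ} {R : Type*} [CommRing R]

lemma det_vandermonde_eq_prod_ltPairs (v : Fin n → R) :
    det (vandermonde v) = ∏ p ∈ ltPairs (Fin n), (v p.2 - v p.1) := by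
  rw [det_vandermonde, ltPairs, prod_filter, Fintype.prod_prod_type]
  exact prod_congr rfl fun i _ => by rw [← prod_filter]; congr 1; ext j; simp

lemma prod_ltPairs_sub_comp_perm (v : Fin n → R) (σ : Perm (Fin n)) :
    ∏ p ∈ ltPairs (Fin n), (v (σ p.2) - v (σ p.1)) =
      Perm.sign σ * ∏ p ∈ ltPairs (Fin n), (v p.2 - v p.1) := by
  calc _ = det (vandermonde (v ∘ σ)) := (det_vandermonde_eq_prod_ltPairs _).symm
    _ = Perm.sign σ * det (vandermonde v) := det_permute σ (vandermonde v)
    _ = _ := by rw [det_vandermonde_eq_prod_ltPairs]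

lemma prod_ltPairs_sub_comp_perm' (v : Fin n → R) (σ : Perm (Fin n)) :
    ∏ p ∈ ltPairs (Fin n), (v (σ p.1) - v (σ p.2)) =
      Perm.sign σ * ∏ p ∈ ltPairs (Fin n), (v p.1 - v p.2) := by
  simpa [neg_add_eq_sub] using prod_ltPairs_sub_comp_perm (-v) σ

lemma vandermonde_mul_of_coeff (w : Fin n → R) (q : Fin n → R[X])
    (hq : ∀ k, (q k).natDegree < n) :
    vandermonde w * of (fun (m k : Fin n) => (q k).coeff m) =
      of fun i k => (q k).eval (w i) := by
  ext i k
  simp only [mul_apply, vandermonde_apply, of_apply, eval_eq_sum_range' (hq k), mul_comm]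
  exact Fin.sum_univ_eq_sum_range (fun m => w i ^ m * (q k).coeff m) n

lemma intCast_units_mul_self (u : ℤˣ) : ((u : ℤ) : R) * u = 1 := by
  rw [← Int.cast_mul, ← Units.val_mul, Int.units_mul_self, Units.val_one, Int.cast_one]

lemma sum_sign_mul_prod_ltPairs_sub_add (x : Fin n → R) (c : Fin n × Fin n → R) :
    ∑ σ : Perm (Fin n),
        (Perm.sign σ : R) * ∏ p ∈ ltPairs (Fin n), (x (σ p.1) - x (σ p.2) + c p) =
      n ! * ∏ p ∈ ltPairs (Fin n), (x p.1 - x p.2) := by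
  simp_rw [prod_add, mul_sum]
  rw [sum_comm, sum_eq_single_of_mem _ (mem_powerset_self _)]
  · simp_rw [sdiff_self, bot_eq_empty, prod_empty, mul_one, prod_ltPairs_sub_comp_perm',
      ← mul_assoc, intCast_units_mul_self, one_mul, sum_const, card_univ, Fintype.card_perm,
      Fintype.card_fin, nsmul_eq_mul]
  · intro T hT hne
    have hcard : #T < (Fintype.card (Fin n)).choose 2 :=
      card_ltPairs (ι := Fin n) ▸ card_lt_card (ssubset_of_subset_of_ne (mem_powerset.1 hT) hne)
    simp_rw [← mul_assoc, ← sum_mul]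
    rw [sum_sign_mul_prod_sub_eq_zero x T hcard, zero_mul]

lemma prod_ltPairs_sub_add_one_mul_comp_perm (v : Fin n → R) (σ : Perm (Fin n)) :
    (∏ p ∈ ltPairs (Fin n), (v (σ p.1) - v (σ p.2) + 1)) *
        ∏ p ∈ ltPairs (Fin n), (v (σ p.2) - v (σ p.1) + 1) =
      ∏ j, ∏ k, (v j + 1 - v k) := by
  rw [← prod_mul_distrib, prod_ltPairs_mul_swap (fun i j => v (σ i) - v (σ j) + 1) (by simp),
    Equiv.prod_comp σ fun i => ∏ j, (v i - v (σ j) + 1)]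
  refine prod_congr rfl fun i _ => ?_
  rw [Equiv.prod_comp σ fun j => v i - v j + 1]
  simp_rw [sub_add_eq_add_sub]

end Vandermonde

theorem det_cauchy {n : ℕ} {K : Type*} [Field K] (x y : Fin n → K) (hxy : ∀ i j, x i ≠ y j) :
    det (of fun i j => 1 / (x i - y j)) =
      det (vandermonde x) * (∏ p ∈ ltPairs (Fin n), (y p.1 - y p.2)) / ∏ i, ∏ j, (x i - y j) := by
  have hprod : ∏ i, ∏ j, (x i - y j) ≠ 0 :=
    prod_ne_zero_iff.2 fun i _ => prod_ne_zero_iff.2 fun j _ => sub_ne_zero.2 (hxy i j)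
  rw [eq_div_iff hprod]
  by_cases hy : Injective y
  swap
  · obtain ⟨i, j, hij, hne⟩ := not_injective_iff.1 hy
    have hdet : det (of fun i j => 1 / (x i - y j)) = 0 :=
      det_zero_of_column_eq hne fun k => by simp [hij]
    have hpairs : ∏ p ∈ ltPairs (Fin n), (y p.1 - y p.2) = 0 := by
      rcases hne.lt_or_gt with h | h
      · exact prod_eq_zero (i := (i, j)) (mem_ltPairs.2 h) (by simp [hij])
      · exact prod_eq_zero (i := (j, i)) (mem_ltPairs.2 h) (by simp [hij])
    rw [hdet, hpairs, zero_mul, mul_zero]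
  -- `q k` vanishes at `y j` for `j ≠ k`, and `q k (x i) = ∏ j, (x i - y j) / (x i - y k)`: the
  -- coefficient matrix `A` of the `q k` turns `vandermonde y` into a diagonal matrix and
  -- `vandermonde x` into the Cauchy matrix with scaled rows.
  let q k : K[X] := ∏ j ∈ univ.erase k, (X - C (y j))
  have hq (k : Fin n) : (q k).natDegree < n := by
    rw [natDegree_prod_of_monic _ _ fun j _ => monic_X_sub_C (y j)]
    simp only [natDegree_X_sub_C, sum_const, smul_eq_mul, mul_one, card_erase_of_mem (mem_univ k),
      card_univ, Fintype.card_fin]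
    exact Nat.sub_lt (Fin.pos k) one_pos
  have heval (z : K) (k : Fin n) : (q k).eval z = ∏ j ∈ univ.erase k, (z - y j) := by
    simp [q, eval_prod]
  set A : Matrix (Fin n) (Fin n) K := of fun m k => (q k).coeff m
  have hyA : vandermonde y * A = diagonal fun k => ∏ j ∈ univ.erase k, (y k - y j) := by
    rw [vandermonde_mul_of_coeff y q hq]
    ext i k
    rcases eq_or_ne i k with rfl | h
    · simp [heval]
    · rw [of_apply, heval, diagonal_apply_ne _ h]
      exact prod_eq_zero (mem_erase.2 ⟨h, mem_univ i⟩) (sub_self (y i))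
  have hxA : vandermonde x * A = of fun i k => (∏ j, (x i - y j)) * (1 / (x i - y k)) := by
    rw [vandermonde_mul_of_coeff x q hq]
    ext i k
    rw [of_apply, of_apply, heval, ← mul_prod_erase univ (fun j => x i - y j) (mem_univ k)]
    field_simp [sub_ne_zero.2 (hxy i k)]
  have hdetA : det A = ∏ p ∈ ltPairs (Fin n), (y p.1 - y p.2) := by
    have h := congrArg det hyA
    rw [det_mul, det_diagonal, prod_prod_erase_eq_prod_ltPairs, prod_mul_distrib, mul_comm,
      ← det_vandermonde_eq_prod_ltPairs] at h
    exact mul_right_cancel₀ (det_vandermonde_ne_zero_iff.2 hy) h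
  have h := congrArg det hxA
  rw [det_mul, hdetA] at h
  rw [mul_comm, ← det_mul_column]
  exact h.symm

theorem symmetrization_det_identity_general (κ : ℕ) (v : Fin κ → ℂ)
    (hv : ∀ j k : Fin κ, j ≠ k → v j - v k + 1 ≠ 0) :
    (1 / (Nat.factorial κ : ℂ)) *
        ∑ σ : Equiv.Perm (Fin κ),
          ∏ p ∈ Finset.univ.filter (fun p : Fin κ × Fin κ => p.1 < p.2),
            (v (σ p.2) - v (σ p.1)) / (v (σ p.2) - v (σ p.1) + 1) =
      Matrix.det (Matrix.of fun j k : Fin κ => 1 / (v j + 1 - v k)) := by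
  change _ * ∑ σ : Perm (Fin κ), ∏ p ∈ ltPairs (Fin κ), _ = _
  have hxy (j k : Fin κ) : v j + 1 ≠ v k := by
    rcases eq_or_ne j k with rfl | h
    · simp
    · simpa [sub_ne_zero, sub_add_eq_add_sub] using hv j k h
  have hD : ∏ j, ∏ k, (v j + 1 - v k) ≠ 0 :=
    prod_ne_zero_iff.2 fun j _ => prod_ne_zero_iff.2 fun k _ => sub_ne_zero.2 (hxy j k)
  have hterm (σ : Perm (Fin κ)) :
      ∏ p ∈ ltPairs (Fin κ), (v (σ p.2) - v (σ p.1)) / (v (σ p.2) - v (σ p.1) + 1) =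
        (∏ p ∈ ltPairs (Fin κ), (v p.2 - v p.1)) / (∏ j, ∏ k, (v j + 1 - v k)) *
          ((Perm.sign σ : ℂ) * ∏ p ∈ ltPairs (Fin κ), (v (σ p.1) - v (σ p.2) + 1)) := by
    rw [← prod_ltPairs_sub_add_one_mul_comp_perm v σ] at hD ⊢
    rw [prod_div_distrib, prod_ltPairs_sub_comp_perm]
    field_simp [left_ne_zero_of_mul hD, right_ne_zero_of_mul hD]
  rw [sum_congr rfl fun σ _ => hterm σ, ← mul_sum, sum_sign_mul_prod_ltPairs_sub_add,
    det_cauchy _ _ hxy, det_vandermonde_add, det_vandermonde_eq_prod_ltPairs]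
  field_simp [Nat.factorial_ne_zero]

/-- Symmetrization identity: the symmetrization of
`∏_{p<q} (v_q − v_p)/(v_q − v_p + 1)` equals `det[1/(v_j + 1 − v_k)]`. -/
theorem symmetrization_det_identity (κ : ℕ) (hκ : 0 < κ) (v : Fin κ → ℂ)
    (hv : ∀ j k : Fin κ, j ≠ k → v j - v k + 1 ≠ 0) :
    (1 / (Nat.factorial κ : ℂ)) *
        ∑ σ : Equiv.Perm (Fin κ),
          ∏ p ∈ Finset.univ.filter (fun p : Fin κ × Fin κ => p.1 < p.2),
            (v (σ p.2) - v (σ p.1)) / (v (σ p.2) - v (σ p.1) + 1) =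
      Matrix.det (Matrix.of fun j k : Fin κ => 1 / (v j + 1 - v k)) :=
  symmetrization_det_identity_general κ v hv
end
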